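/- For f(w1,w2) = w1^2 w2^2 and the standard 2D Gaussian density φ, the modified zeta function ζ₁(z) = ∫∫ |w1|·(w1^2 w2^2)^z φ(w1,w2) dw1 dw2 equals (2^{2z+1/2}/π)·Γ(z+1)·Γ(z+1/2) for all real z > -1/2. -/
import Mathlib


open Real MeasureTheory

lemma aux_abs_rpow_gauss {p : ℝ} (hp : -1 < p) :
    ∫ x : ℝ, |x| ^ p * Real.exp (-(x ^ 2) / 2)
      = 2 ^ ((p + 1) / 2) * Real.Gamma ((p + 1) / 2) := by
  have key := integral_rpow_mul_exp_neg_mul_rpow (p := 2) (q := p) (b := 1/2)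
    two_pos hp one_half_pos
  have h1 : (∫ x : ℝ, |x| ^ p * Real.exp (-(x ^ 2) / 2))
      = 2 * ∫ x in Set.Ioi (0:ℝ), x ^ p * Real.exp (-(1/2) * x ^ (2:ℝ)) := by
    rw [← integral_comp_abs (f := fun x => x ^ p * Real.exp (-(1/2) * x ^ (2:ℝ)))]
    congr 1 with x
    rw [show ((2:ℝ)) = ((2:ℕ):ℝ) by norm_num, Real.rpow_natCast, sq_abs]
    ring_nf
  rw [h1, key]
  have h2 : ((1:ℝ)/2) ^ (-(p + 1) / 2) = 2 ^ ((p + 1) / 2) := by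
    rw [one_div, ← Real.rpow_neg_one 2, ← Real.rpow_mul (by norm_num : (0:ℝ) ≤ 2)]
    congr 1; ring
  rw [h2]; ring

lemma aux_point (z : ℝ) (hz : z > -(1/2)) (x : ℝ) :
    |x| * (x ^ 2) ^ z = |x| ^ (2 * z + 1) := by
  rcases eq_or_ne x 0 with rfl | hx
  · have h1 : (2 * z + 1) ≠ 0 := ne_of_gt (by linarith)
    simp [Real.zero_rpow h1]
  · have hx' : 0 < |x| := abs_pos.mpr hx
    rw [← sq_abs, ← Real.rpow_natCast |x| 2, ← Real.rpow_mul hx'.le,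
      Real.rpow_add hx', Real.rpow_one]
    push_cast
    ring

/-- For `f(w1,w2) = w1^2 * w2^2` and the standard 2D Gaussian density,
`ζ₁(z) = ∫∫ |w1| (w1^2 w2^2)^z φ dw = (2^(2z+1/2)/π) Γ(z+1) Γ(z+1/2)` for real `z > -1/2`. -/
theorem zeta1_w1sq_w2sq (z : ℝ) (hz : z > -(1/2)) :
    (∫ w1 : ℝ, ∫ w2 : ℝ,
        |w1| * (w1 ^ 2 * w2 ^ 2) ^ z * (1 / (2 * π) * Real.exp (-(w1 ^ 2 + w2 ^ 2) / 2)))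
      = (2 : ℝ) ^ (2 * z + 1 / 2) / π * Real.Gamma (z + 1) * Real.Gamma (z + 1 / 2) := by
  have hz2 : -1 < 2 * z := by linarith
  have hz1 : -1 < 2 * z + 1 := by linarith
  have step : ∀ w1 w2 : ℝ,
      |w1| * (w1 ^ 2 * w2 ^ 2) ^ z * (1 / (2 * π) * Real.exp (-(w1 ^ 2 + w2 ^ 2) / 2))
        = (1 / (2 * π)) * ((|w1| ^ (2 * z + 1) * Real.exp (-(w1 ^ 2) / 2))
            * (|w2| ^ (2 * z) * Real.exp (-(w2 ^ 2) / 2))) := by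
    intro w1 w2
    have hm : (w1 ^ 2 * w2 ^ 2) ^ z = (w1 ^ 2) ^ z * (w2 ^ 2) ^ z :=
      Real.mul_rpow (sq_nonneg _) (sq_nonneg _)
    have hw2 : (w2 ^ 2) ^ z = |w2| ^ (2 * z) := by
      rw [← sq_abs, ← Real.rpow_natCast |w2| 2, ← Real.rpow_mul (abs_nonneg _)]
      push_cast; ring_nf
    have hexp : Real.exp (-(w1 ^ 2 + w2 ^ 2) / 2)
        = Real.exp (-(w1 ^ 2) / 2) * Real.exp (-(w2 ^ 2) / 2) := by
      rw [← Real.exp_add]; ring_nf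
    rw [hm, hexp, hw2, ← aux_point z hz w1]
    ring
  simp_rw [step, integral_const_mul]
  rw [integral_mul_const, aux_abs_rpow_gauss hz1, aux_abs_rpow_gauss hz2]
  have e1 : (2 * z + 1 + 1) / 2 = z + 1 := by ring
  have e2 : (2 * z + 1) / 2 = z + 1 / 2 := by ring
  rw [e1, e2]
  have hpow : (2:ℝ) ^ (z + 1) * 2 ^ (z + 1 / 2) = 2 ^ (2 * z + 1 / 2) * 2 := by
    rw [← Real.rpow_add two_pos]
    have h := Real.rpow_add two_pos (2 * z + 1 / 2) 1
    rw [Real.rpow_one] at h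
    rw [← h]
    congr 1; ring
  linear_combination (Real.Gamma (z + 1) * Real.Gamma (z + 1 / 2) / (2 * π)) * hpow
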